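/- Let M = 2^m, let d = √(3/(M²−1)), and let s_i = −d(M−2i+1) for i = 1,...,M be the equally spaced M-PAM constellation of unit average energy. Let ρ > 0 and let p ∈ {0,1}^M be a pattern of Hamming weight M/2. With midpoint thresholds β_k = (s_k + s_{k+1})/2 (and β_0 = −∞, β_M = +∞) and the threshold demodulator that outputs p_k when the observation lies in (β_{k−1}, β_k], the pattern bit-error rate P = (1/M) ∑_{i=1}^{M} Pr{output bit ≠ p_i | transmitted point is s_i} (with additive zero-mean Gaussian noise of variance 1/(2ρ)) equals P = (1/M) ∑_{n=1}^{M−1} a_n · Q((2n−1)·d·√(2ρ)), where a_n = ∑_{k=n}^{M−1} [ (p_{k+1} − p_k)(1 − 2 p_{k+1−n}) − (p_{k+2−n} − p_{k+1−n})(1 − 2 p_{k+1}) ], with bits treated as integers. -/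

import Mathlib

open MeasureTheory

/-- The Gaussian Q-function `Q(x) = (1/√(2π)) ∫_x^∞ e^{-t²/2} dt`. -/
noncomputable def Qfun (x : ℝ) : ℝ :=
  ∫ t in Set.Ioi x, (Real.sqrt (2 * Real.pi))⁻¹ * Real.exp (-t ^ 2 / 2)

/-- The Gaussian density with mean `μ` and variance `1/(2ρ)`
(the AWGN channel transition density at SNR `ρ`). -/
noncomputable def gaussDens (ρ μ y : ℝ) : ℝ :=
  Real.sqrt (ρ / Real.pi) * Real.exp (-ρ * (y - μ) ^ 2)

/-- The `k`-th decision region (for `k = 1, …, M`) of a threshold demodulator with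
thresholds `β 1 ≤ … ≤ β (M-1)`, together with `β 0 = -∞` and `β M = +∞`:
region `k` is `(β (k-1), β k]`. -/
def region (β : ℕ → ℝ) (M k : ℕ) : Set ℝ :=
  if k = 1 then Set.Iic (β 1)
  else if k = M then Set.Ioi (β (M - 1))
  else Set.Ioc (β (k - 1)) (β k)

/-- A bit viewed as a real number. -/
def bitR (b : Bool) : ℝ := if b then 1 else 0

/-!
Write the probability of the decision region `(β_{k-1}, β_k]` as `T_{k-1} - T_k`, where
`T_k = Q((β_k - s_i)√(2ρ))` is the Gaussian tail beyond the `k`-th threshold. Abel summation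
turns the conditional error probability of symbol `i` into a combination of the `T_k`, whose
arguments `(2(k - i) + 1) d √(2ρ)` depend only on `k - i`. In the signs `c_i = 1 - 2 p_i`, which
sum to zero because the pattern is balanced, the indicator of `p_k ≠ p_i` is `(1 - c_i c_k) / 2`.
Reflecting the tails with `k < i` by `Q(-x) = 1 - Q(x)` and collecting terms by the odd multiple
`2n - 1` produces the coefficients `a_n`; the constant terms cancel because
`∑_k (c_{k+1} - c_k) ∑_{i ≤ k} c_i = -∑_i c_i² = -M`.
-/

section Gaussian

open Set Real

variable {ρ : ℝ}

lemma integrable_gaussDens (hρ : 0 < ρ) (μ : ℝ) : Integrable (gaussDens ρ μ) :=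
  ((integrable_exp_neg_mul_sq hρ).comp_sub_right μ).const_mul √(ρ / π)

lemma integral_gaussDens (hρ : 0 < ρ) (μ : ℝ) : ∫ y, gaussDens ρ μ y = 1 := by
  simp only [gaussDens]
  rw [integral_const_mul, integral_sub_right_eq_self (fun y => rexp (-ρ * y ^ 2)) μ,
    integral_gaussian, ← sqrt_mul (by positivity), show ρ / π * (π / ρ) = 1 by field_simp,
    sqrt_one]

lemma setIntegral_comp_sub_right_Ioi (g : ℝ → ℝ) (μ a : ℝ) :
    ∫ y in Ioi a, g (y - μ) = ∫ x in Ioi (a - μ), g x := by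
  have := (measurePreserving_sub_right volume μ).setIntegral_preimage_emb
    (measurableEmbedding_subRight μ) g (Ioi (a - μ))
  simpa using this

lemma setIntegral_gaussDens_Ioi (hρ : 0 < ρ) (μ a : ℝ) :
    ∫ y in Ioi a, gaussDens ρ μ y = Qfun ((a - μ) * √(2 * ρ)) := by
  have hc : 0 < √(2 * ρ) := sqrt_pos.2 (by positivity)
  set φ : ℝ → ℝ := fun t => (√(2 * π))⁻¹ * rexp (-t ^ 2 / 2) with hφ
  have hscale : ∀ y, gaussDens ρ μ y = √(2 * ρ) * φ ((y - μ) * √(2 * ρ)) := by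
    intro y
    simp only [gaussDens, hφ]
    rw [mul_pow, sq_sqrt (by positivity), ← mul_assoc, ← sqrt_inv,
      ← sqrt_mul (by positivity)]
    congr 2
    · field_simp
    · ring
  simp_rw [hscale]
  rw [integral_const_mul, setIntegral_comp_sub_right_Ioi (fun x => φ (x * √(2 * ρ))),
    integral_comp_mul_right_Ioi φ _ hc, smul_eq_mul, mul_inv_cancel_left₀ hc.ne']
  rfl

lemma setIntegral_gaussDens_Iic (hρ : 0 < ρ) (μ b : ℝ) :
    ∫ y in Iic b, gaussDens ρ μ y = 1 - Qfun ((b - μ) * √(2 * ρ)) := by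
  have := intervalIntegral.integral_Iic_add_Ioi (b := b) (integrable_gaussDens hρ μ).integrableOn
    (integrable_gaussDens hρ μ).integrableOn
  rw [integral_gaussDens hρ, setIntegral_gaussDens_Ioi hρ] at this
  linarith

lemma setIntegral_gaussDens_Ioc (hρ : 0 < ρ) (μ : ℝ) {a b : ℝ} (hab : a ≤ b) :
    ∫ y in Ioc a b, gaussDens ρ μ y
      = Qfun ((a - μ) * √(2 * ρ)) - Qfun ((b - μ) * √(2 * ρ)) := by
  have := setIntegral_union (Ioc_disjoint_Ioi (a := a) (le_refl b)) measurableSet_Ioi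
    (integrable_gaussDens hρ μ).integrableOn (integrable_gaussDens hρ μ).integrableOn
  rw [Ioc_union_Ioi_eq_Ioi hab, setIntegral_gaussDens_Ioi hρ, setIntegral_gaussDens_Ioi hρ] at this
  linarith

lemma Qfun_neg (x : ℝ) : Qfun (-x) = 1 - Qfun x := by
  have hQ : ∀ x, Qfun x = ∫ t in Ioi x, gaussDens (1 / 2) 0 (-t) := fun x => by
    simp only [Qfun, gaussDens]
    congr! 3 with t
    · rw [← sqrt_inv]
      ring_nf
    · ring_nf
  rw [hQ, integral_comp_neg_Ioi, neg_neg, setIntegral_gaussDens_Iic (by norm_num)]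
  norm_num

end Gaussian

/-- The probability `P(Y > β j)` for `Y` with density `gaussDens ρ μ`, with `β 0 = -∞` and
`β M = +∞` as in `region`. -/
noncomputable def exceedProb (ρ μ : ℝ) (β : ℕ → ℝ) (M j : ℕ) : ℝ :=
  if j = 0 then 1 else if j = M then 0 else Qfun ((β j - μ) * √(2 * ρ))

lemma integral_region_gaussDens {ρ : ℝ} (hρ : 0 < ρ) (μ : ℝ) {β : ℕ → ℝ} {M k : ℕ}
    (hM : 2 ≤ M) (hβ : MonotoneOn β (Set.Icc 1 (M - 1))) (hk : k ∈ Finset.Icc 1 M) :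
    ∫ y in region β M k, gaussDens ρ μ y = exceedProb ρ μ β M (k - 1) - exceedProb ρ μ β M k := by
  rw [Finset.mem_Icc] at hk
  unfold region exceedProb
  by_cases hk1 : k = 1
  · simp [hk1, setIntegral_gaussDens_Iic hρ, show 1 ≠ M by omega]
  by_cases hkM : k = M
  · simp [hkM, setIntegral_gaussDens_Ioi hρ, show M ≠ 1 by omega, show M - 1 ≠ 0 by omega,
      show M - 1 ≠ M by omega, show M ≠ 0 by omega]
  have hβk : β (k - 1) ≤ β k := hβ (by simp; omega) (by simp; omega) (by omega)
  simp [hk1, hkM, setIntegral_gaussDens_Ioc hρ μ hβk, show k - 1 ≠ 0 by omega,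
    show k - 1 ≠ M by omega, show k ≠ 0 by omega]

lemma sum_Icc_mul_sub_by_parts (e u : ℕ → ℝ) (n : ℕ) :
    ∑ k ∈ Finset.Icc 1 (n + 1), e k * (u (k - 1) - u k)
      = e 1 * u 0 - e (n + 1) * u (n + 1) + ∑ k ∈ Finset.Icc 1 n, (e (k + 1) - e k) * u k := by
  induction n with
  | zero => simp; ring
  | succ n ih =>
    rw [Finset.sum_Icc_succ_top (by omega), ih, Finset.sum_Icc_succ_top (by omega)]
    simp only [Nat.add_sub_cancel]
    ring

lemma sum_mul_integral_region_gaussDens {ρ : ℝ} (hρ : 0 < ρ) (μ : ℝ) {β : ℕ → ℝ} {M : ℕ}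
    (hM : 2 ≤ M) (hβ : MonotoneOn β (Set.Icc 1 (M - 1))) (e : ℕ → ℝ) :
    ∑ k ∈ Finset.Icc 1 M, e k * ∫ y in region β M k, gaussDens ρ μ y
      = e 1 + ∑ k ∈ Finset.Icc 1 (M - 1), (e (k + 1) - e k) * Qfun ((β k - μ) * √(2 * ρ)) := by
  obtain ⟨n, rfl⟩ : ∃ n, M = n + 1 := ⟨M - 1, by omega⟩
  rw [Finset.sum_congr rfl fun k hk => by rw [integral_region_gaussDens hρ μ hM hβ hk],
    sum_Icc_mul_sub_by_parts, Nat.add_sub_cancel]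
  have hinterior : ∀ k ∈ Finset.Icc 1 n,
      exceedProb ρ μ β (n + 1) k = Qfun ((β k - μ) * √(2 * ρ)) := fun k hk => by
    rw [Finset.mem_Icc] at hk
    simp [exceedProb, show k ≠ 0 by omega, show k ≠ n + 1 by omega]
  rw [Finset.sum_congr rfl fun k hk => by rw [hinterior k hk]]
  simp [exceedProb]

section SignCorrelation

open Finset

lemma sum_Icc_reflect {R : Type*} [AddCommMonoid R] (f : ℕ → R) (k : ℕ) :
    ∑ i ∈ Icc 1 k, f (k + 1 - i) = ∑ i ∈ Icc 1 k, f i := by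
  refine sum_nbij' (k + 1 - ·) (k + 1 - ·) ?_ ?_ ?_ ?_ fun _ _ => rfl <;> intro i hi <;>
    simp only [mem_Icc] at hi ⊢ <;> omega

lemma sum_Icc_eq_add_sum_shift {R : Type*} [AddCommMonoid R] (f : ℕ → R) {k M : ℕ}
    (hk : k ≤ M) :
    ∑ i ∈ Icc 1 M, f i = ∑ i ∈ Icc 1 k, f i + ∑ n ∈ Icc 1 (M - k), f (k + n) := by
  have hupper : ∑ n ∈ Icc 1 (M - k), f (k + n) = ∑ i ∈ Ioc k M, f i := by
    refine sum_nbij' (k + ·) (· - k) ?_ ?_ ?_ ?_ ?_ <;> intro i hi <;>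
      simp only [mem_Icc, mem_Ioc] at hi ⊢ <;> omega
  have hIoc (n : ℕ) : Icc 1 n = Ioc 0 n := Icc_add_one_left_eq_Ioc 0 n
  rw [hupper, hIoc, hIoc, sum_Ioc_consecutive f (Nat.zero_le k) hk]

lemma sum_Icc_sum_Icc_comm {R : Type*} [AddCommMonoid R] (f : ℕ → ℕ → R) (N : ℕ) :
    ∑ k ∈ Icc 1 N, ∑ n ∈ Icc 1 k, f k n = ∑ n ∈ Icc 1 N, ∑ k ∈ Icc n N, f k n :=
  sum_comm' fun _ _ => by simp only [mem_Icc]; omega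

lemma sum_Icc_sum_Icc_sub_comm {R : Type*} [AddCommMonoid R] (g : ℕ → ℕ → R) (N : ℕ) :
    ∑ k ∈ Icc 1 N, ∑ n ∈ Icc 1 (N + 1 - k), g k n
      = ∑ n ∈ Icc 1 N, ∑ k ∈ Icc n N, g (k + 1 - n) n := by
  rw [sum_comm' (t' := Icc 1 N) (s' := fun n => Icc 1 (N + 1 - n))
    fun _ _ => by simp only [mem_Icc]; omega]
  refine sum_congr rfl fun n hn => ?_
  rw [mem_Icc] at hn
  refine sum_nbij' (· + n - 1) (· + 1 - n) ?_ ?_ ?_ ?_ ?_ <;> intro k hk <;>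
    simp only [mem_Icc] at hk ⊢ <;> first | omega | congr 1; omega

variable (c : ℕ → ℝ)

lemma sum_Icc_sub_mul_sum_Icc (n : ℕ) :
    ∑ k ∈ Icc 1 n, (c (k + 1) - c k) * ∑ i ∈ Icc 1 k, c i
      = c (n + 1) * ∑ i ∈ Icc 1 (n + 1), c i - ∑ i ∈ Icc 1 (n + 1), c i ^ 2 := by
  induction n with
  | zero => simp; ring
  | succ n ih =>
    rw [sum_Icc_succ_top (by omega), ih, sum_Icc_succ_top (b := n + 1) (by omega) c,
      sum_Icc_succ_top (b := n + 1) (by omega) (c · ^ 2)]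
    ring

variable {c} {q : ℝ → ℝ}

lemma sum_mul_reflect {M k : ℕ} (hc : ∑ i ∈ Icc 1 M, c i = 0) (hq : ∀ x, q (-x) = 1 - q x)
    (hk : k ≤ M) :
    ∑ i ∈ Icc 1 M, c i * q (2 * k - 2 * i + 1)
      = ∑ n ∈ Icc 1 k, c (k + 1 - n) * q (2 * n - 1)
        - ∑ n ∈ Icc 1 (M - k), c (k + n) * q (2 * n - 1) - ∑ i ∈ Icc 1 k, c i := by
  have hsplit := sum_Icc_eq_add_sum_shift c hk
  rw [hc] at hsplit
  have hlower : ∀ n ∈ Icc 1 k, c (k + 1 - n) * q (2 * k - 2 * ↑(k + 1 - n : ℕ) + 1)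
      = c (k + 1 - n) * q (2 * n - 1) := fun n hn => by
    rw [mem_Icc] at hn
    rw [Nat.cast_sub (by omega)]
    push_cast
    ring_nf
  have hupper : ∀ n ∈ Icc 1 (M - k), c (k + n) * q (2 * k - 2 * ↑(k + n : ℕ) + 1)
      = c (k + n) - c (k + n) * q (2 * n - 1) := fun n _ => by
    rw [Nat.cast_add, show 2 * (k : ℝ) - 2 * (k + n) + 1 = -(2 * n - 1) by ring, hq]
    ring
  rw [sum_Icc_eq_add_sum_shift _ hk, ← sum_Icc_reflect, sum_congr rfl hlower,
    sum_congr rfl hupper, sum_sub_distrib]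
  linarith

lemma sum_sub_mul_sum_mul_reflect {M : ℕ} (hc2 : ∀ i ∈ Icc 1 M, c i ^ 2 = 1)
    (hc : ∑ i ∈ Icc 1 M, c i = 0) (hq : ∀ x, q (-x) = 1 - q x) :
    ∑ k ∈ Icc 1 (M - 1), (c (k + 1) - c k) * ∑ i ∈ Icc 1 M, c i * q (2 * k - 2 * i + 1)
      = M + ∑ n ∈ Icc 1 (M - 1), (∑ k ∈ Icc n (M - 1),
          ((c (k + 1) - c k) * c (k + 1 - n) - (c (k + 2 - n) - c (k + 1 - n)) * c (k + 1)))
            * q (2 * n - 1) := by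
  rcases M with _ | N
  · simp
  simp only [Nat.add_sub_cancel]
  have hpartial : ∑ k ∈ Icc 1 N, (c (k + 1) - c k) * ∑ i ∈ Icc 1 k, c i = -(N + 1 : ℕ) := by
    rw [sum_Icc_sub_mul_sum_Icc, hc, sum_congr rfl hc2]
    simp
  have hlower : ∑ k ∈ Icc 1 N, (c (k + 1) - c k) * ∑ n ∈ Icc 1 k, c (k + 1 - n) * q (2 * n - 1)
      = ∑ n ∈ Icc 1 N, ∑ k ∈ Icc n N, (c (k + 1) - c k) * c (k + 1 - n) * q (2 * n - 1) := by
    simp_rw [mul_sum, ← mul_assoc]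
    exact sum_Icc_sum_Icc_comm _ N
  have hupper : ∑ k ∈ Icc 1 N,
        (c (k + 1) - c k) * ∑ n ∈ Icc 1 (N + 1 - k), c (k + n) * q (2 * n - 1)
      = ∑ n ∈ Icc 1 N, ∑ k ∈ Icc n N,
          (c (k + 2 - n) - c (k + 1 - n)) * c (k + 1) * q (2 * n - 1) := by
    simp_rw [mul_sum, ← mul_assoc]
    rw [sum_Icc_sum_Icc_sub_comm]
    refine sum_congr rfl fun n _ => sum_congr rfl fun k hk => ?_
    rw [mem_Icc] at hk
    rw [show k + 1 - n + 1 = k + 2 - n by omega, show k + 1 - n + n = k + 1 by omega]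
  rw [sum_congr rfl fun k hk => by rw [sum_mul_reflect hc hq (by simp at hk; omega)]]
  simp only [mul_sub, sum_sub_distrib]
  rw [hlower, hupper, hpartial]
  simp only [sub_mul, sum_sub_distrib, sum_mul]
  push_cast
  ring

lemma sum_error_of_signs {M : ℕ} (hc2 : ∀ i ∈ Icc 1 M, c i ^ 2 = 1)
    (hc : ∑ i ∈ Icc 1 M, c i = 0) (hq : ∀ x, q (-x) = 1 - q x) :
    ∑ i ∈ Icc 1 M, ((1 - c i * c 1) / 2
        - c i / 2 * ∑ k ∈ Icc 1 (M - 1), (c (k + 1) - c k) * q (2 * k - 2 * i + 1))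
      = -(1 / 2) * ∑ n ∈ Icc 1 (M - 1), (∑ k ∈ Icc n (M - 1),
          ((c (k + 1) - c k) * c (k + 1 - n) - (c (k + 2 - n) - c (k + 1 - n)) * c (k + 1)))
            * q (2 * n - 1) := by
  have hconst : ∑ i ∈ Icc 1 M, (1 - c i * c 1) / 2 = M / 2 := by
    rw [← sum_div, sum_sub_distrib, ← sum_mul, hc]
    simp
  have hswap : ∑ i ∈ Icc 1 M,
        c i / 2 * ∑ k ∈ Icc 1 (M - 1), (c (k + 1) - c k) * q (2 * k - 2 * i + 1)
      = 1 / 2 * ∑ k ∈ Icc 1 (M - 1),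
        (c (k + 1) - c k) * ∑ i ∈ Icc 1 M, c i * q (2 * k - 2 * i + 1) := by
    simp_rw [mul_sum]
    rw [sum_comm]
    exact sum_congr rfl fun k _ => sum_congr rfl fun i _ => by ring
  rw [sum_sub_distrib, hconst, hswap, sum_sub_mul_sum_mul_reflect hc2 hc hq]
  ring

end SignCorrelation

def bitSign (b : Bool) : ℝ := 1 - 2 * bitR b

lemma bitSign_sq (b : Bool) : bitSign b ^ 2 = 1 := by
  cases b <;> norm_num [bitSign, bitR]

lemma ite_ne_eq_bitSign (a b : Bool) :
    (if a ≠ b then (1 : ℝ) else 0) = (1 - bitSign a * bitSign b) / 2 := by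
  cases a <;> cases b <;> norm_num [bitSign, bitR]

lemma sum_bitSign_eq_zero {M : ℕ} (hM : Even M) (p : ℕ → Bool)
    (hp : ((Finset.Icc 1 M).filter (fun i => p i = true)).card = M / 2) :
    ∑ i ∈ Finset.Icc 1 M, bitSign (p i) = 0 := by
  have hbits : ∑ i ∈ Finset.Icc 1 M, bitR (p i) = M / 2 := by
    simp only [bitR, Finset.sum_boole, hp]
    exact Nat.cast_div_charZero hM.two_dvd
  simp only [bitSign, Finset.sum_sub_distrib, ← Finset.mul_sum, hbits]
  simp only [Finset.sum_const, Nat.card_Icc, Nat.add_sub_cancel, nsmul_eq_mul, mul_one]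
  ring

lemma sum_ite_ne_integral_region {ρ : ℝ} (hρ : 0 < ρ) (μ : ℝ) {β : ℕ → ℝ} {M : ℕ}
    (hM : 2 ≤ M) (hβ : MonotoneOn β (Set.Icc 1 (M - 1))) (p : ℕ → Bool) (b : Bool) :
    ∑ k ∈ Finset.Icc 1 M, (if p k ≠ b then ∫ y in region β M k, gaussDens ρ μ y else 0)
      = (1 - bitSign b * bitSign (p 1)) / 2 - bitSign b / 2 * ∑ k ∈ Finset.Icc 1 (M - 1),
          (bitSign (p (k + 1)) - bitSign (p k)) * Qfun ((β k - μ) * √(2 * ρ)) := by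
  have hind (k : ℕ) : (if p k ≠ b then ∫ y in region β M k, gaussDens ρ μ y else 0)
      = (1 - bitSign (p k) * bitSign b) / 2 * ∫ y in region β M k, gaussDens ρ μ y := by
    rw [← ite_ne_eq_bitSign, ite_mul, one_mul, zero_mul]
  rw [Finset.sum_congr rfl fun k _ => hind k, sum_mul_integral_region_gaussDens hρ μ hM hβ,
    Finset.mul_sum, sub_eq_add_neg _ (Finset.sum _ _), ← Finset.sum_neg_distrib]
  congr 1
  · ring
  · exact Finset.sum_congr rfl fun k _ => by ring

lemma threshold_eq_of_pam {M : ℕ} {d : ℝ} {s β : ℕ → ℝ}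
    (hs : ∀ i ∈ Finset.Icc 1 M, s i = -d * ((M : ℝ) - 2 * i + 1))
    (hβ : ∀ k ∈ Finset.Icc 1 (M - 1), β k = (s k + s (k + 1)) / 2) {k : ℕ}
    (hk : k ∈ Finset.Icc 1 (M - 1)) : β k = d * (2 * k - M) := by
  rw [Finset.mem_Icc] at hk
  rw [hβ k (by simp; omega), hs k (by simp; omega), hs (k + 1) (by simp; omega)]
  push_cast
  ring

theorem pattern_ber_mpam (m M : ℕ) (hm : 1 ≤ m) (hM : M = 2 ^ m)
    (d : ℝ) (hd : d = Real.sqrt (3 / ((M : ℝ) ^ 2 - 1)))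
    (s : ℕ → ℝ) (hs : ∀ i ∈ Finset.Icc 1 M, s i = -d * ((M : ℝ) - 2 * i + 1))
    (ρ : ℝ) (hρ : 0 < ρ)
    (p : ℕ → Bool)
    (hp : ((Finset.Icc 1 M).filter (fun i => p i = true)).card = M / 2)
    (β : ℕ → ℝ) (hβ : ∀ k ∈ Finset.Icc 1 (M - 1), β k = (s k + s (k + 1)) / 2) :
    (M : ℝ)⁻¹ * ∑ i ∈ Finset.Icc 1 M, ∑ k ∈ Finset.Icc 1 M,
        (if p k ≠ p i then ∫ y in region β M k, gaussDens ρ (s i) y else 0)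
      = (M : ℝ)⁻¹ * ∑ n ∈ Finset.Icc 1 (M - 1),
          (∑ k ∈ Finset.Icc n (M - 1),
            ((bitR (p (k + 1)) - bitR (p k)) * (1 - 2 * bitR (p (k + 1 - n))) -
              (bitR (p (k + 2 - n)) - bitR (p (k + 1 - n))) * (1 - 2 * bitR (p (k + 1))))) *
            Qfun ((2 * (n : ℝ) - 1) * d * Real.sqrt (2 * ρ)) := by
  have hM2 : 2 ≤ M := hM ▸ Nat.le_pow hm
  have hMeven : Even M := hM ▸ (Nat.even_pow' (by omega)).2 even_two
  have hd0 : 0 ≤ d := hd ▸ Real.sqrt_nonneg _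
  have hβmono : MonotoneOn β (Set.Icc 1 (M - 1)) := fun j hj k hk hjk => by
    rw [threshold_eq_of_pam hs hβ (by simpa using hj),
      threshold_eq_of_pam hs hβ (by simpa using hk)]
    gcongr
  set q : ℝ → ℝ := fun x => Qfun (x * d * Real.sqrt (2 * ρ)) with hq_def
  have hq : ∀ x, q (-x) = 1 - q x := fun x => by simp only [hq_def, neg_mul, Qfun_neg]
  have hsymbol : ∀ i ∈ Finset.Icc 1 M, ∑ k ∈ Finset.Icc 1 M,
      (if p k ≠ p i then ∫ y in region β M k, gaussDens ρ (s i) y else 0)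
        = (1 - bitSign (p i) * bitSign (p 1)) / 2 - bitSign (p i) / 2 *
          ∑ k ∈ Finset.Icc 1 (M - 1),
            (bitSign (p (k + 1)) - bitSign (p k)) * q (2 * k - 2 * i + 1) := by
    intro i hi
    rw [sum_ite_ne_integral_region hρ _ hM2 hβmono]
    congr 2
    refine Finset.sum_congr rfl fun k hk => ?_
    rw [threshold_eq_of_pam hs hβ hk, hs i hi, hq_def]
    ring_nf
  rw [Finset.sum_congr rfl hsymbol, sum_error_of_signs (c := fun k => bitSign (p k))
    (fun i _ => bitSign_sq _) (sum_bitSign_eq_zero hMeven p hp) hq, Finset.mul_sum]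
  congr 1
  refine Finset.sum_congr rfl fun n _ => ?_
  rw [← mul_assoc, Finset.mul_sum]
  congr 1
  refine Finset.sum_congr rfl fun k _ => ?_
  simp only [bitSign]
  ring
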